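/- Σ_{i=1}^{n} η(d, i) = f_π(d) for every d ∈ [0,∞)^{n−1}. (This is the balance equation showing that the product of the exponential distributions Exp(λ_i) is a stationary distribution for the differences (d_1, …, d_{n−1}) between consecutive tokens in the exponential-jump process.) -/
import Mathlib

private lemma aux_exp_Ioi {r : ℝ} (hr : 0 < r) :
    ∫ x in Set.Ioi (0:ℝ), Real.exp (-(r * x)) = 1 / r := by
  have h := Real.integral_rpow_mul_exp_neg_mul_Ioi (one_pos) hr
  simpa [Real.Gamma_one, Real.rpow_one] using h

private lemma aux_exp_interval (c t : ℝ) (hc : c ≠ 0) :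
    ∫ x in (0:ℝ)..t, Real.exp (-(c * x)) = (1 - Real.exp (-(c * t))) / c := by
  have h : ∀ x : ℝ, Real.exp (-(c * x)) = Real.exp ((-c) * x) := by
    intro x; ring_nf
  simp_rw [h]
  rw [intervalIntegral.integral_comp_mul_left (f := Real.exp) (neg_ne_zero.2 hc)]
  simp only [mul_zero, integral_exp, smul_eq_mul]
  rw [show (-c) * t = -(c * t) by ring, Real.exp_zero, inv_mul_eq_div,
    div_eq_div_iff (neg_ne_zero.2 hc) hc]
  ring

/-- **Balance equation for the exponential-jump process (Theorem 5).**
With `λ i = n·σ_{≤i} - i > 0`, `f_π` the product density of the exponential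
distributions `Exp(λ i)` and `e i` the `i`-th unit vector (convention `e n = 0`),
the intensities `η(d, i)` given by the recurrence below satisfy
`∑_{i=1}^{n} η(d, i) = f_π(d)` for every `d ∈ [0,∞)^{n-1}`: the product of the
`Exp(λ i)` is a stationary distribution for the token differences of the EJP. -/
theorem ejp_stationary_balance
    (n : ℕ) (hn : 1 ≤ n) (σ : ℕ → ℝ)
    (hσ0 : ∀ i ∈ Finset.Icc 1 n, 0 ≤ σ i)
    (hσ1 : ∑ i ∈ Finset.Icc 1 n, σ i = 1)
    (σle : ℕ → ℝ) (hσle : ∀ i, σle i = ∑ j ∈ Finset.Icc 1 i, σ j)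
    (hstar : ∀ i ∈ Finset.Icc 1 (n - 1), (i : ℝ) / n < σle i)
    (lam : ℕ → ℝ) (hlam : ∀ i, lam i = n * σle i - i)
    (fπ : (ℕ → ℝ) → ℝ)
    (hfπ : ∀ d : ℕ → ℝ,
      fπ d = ∏ i ∈ Finset.Icc 1 (n - 1), lam i * Real.exp (-(lam i * d i)))
    (e : ℕ → ℕ → ℝ)
    (he : ∀ i j, e i j = if j = i ∧ i ≤ n - 1 then 1 else 0)
    (η : (ℕ → ℝ) → ℕ → ℝ)
    (hη1 : ∀ d : ℕ → ℝ, (∀ j, 0 ≤ d j) →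
      η d 1 = σ 1 * ∫ x in Set.Ioi (0 : ℝ),
        fπ (fun j => d j + x * e 1 j) * Real.exp (-x))
    (hηi : ∀ d : ℕ → ℝ, (∀ j, 0 ≤ d j) → ∀ i, 2 ≤ i → i ≤ n →
      η d i = σ i * (∫ x in (0 : ℝ)..(d (i - 1)),
          fπ (fun j => d j + x * (e i j - e (i - 1) j)) * Real.exp (-x))
        + η (fun j => d j + d (i - 1) * (e i j - e (i - 1) j)) (i - 1)
            * Real.exp (-(d (i - 1))))
    (d : ℕ → ℝ) (hd : ∀ j, 0 ≤ d j) :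
    ∑ i ∈ Finset.Icc 1 n, η d i = fπ d := by
  have hn0 : ((n : ℝ)) ≠ 0 := by positivity
  -- `lam n = 0`
  have hlamn : lam n = 0 := by
    rw [hlam, hσle, hσ1]; ring
  -- shift lemma for `fπ`
  have hS : ∀ (d : ℕ → ℝ) (x : ℝ) (i : ℕ), 1 ≤ i → i ≤ n →
      fπ (fun j => d j + x * e i j) = fπ d * Real.exp (-(lam i * x)) := by
    intro d x i hi1 hin
    rcases eq_or_lt_of_le hin with heq | hlt
    · subst heq
      have he0 : ∀ j, e i j = 0 := by
        intro j; rw [he]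
        split_ifs with hcond
        · exfalso; omega
        · rfl
      simp [he0, hlamn]
    · have hin' : i ≤ n - 1 := by omega
      have himem : i ∈ Finset.Icc 1 (n - 1) := by
        simp only [Finset.mem_Icc]; omega
      rw [hfπ, hfπ, ← Finset.mul_prod_erase _ _ himem,
        ← Finset.mul_prod_erase _ _ himem]
      have heii : e i i = 1 := by rw [he]; simp [hin']
      have hrest : ∀ j ∈ (Finset.Icc 1 (n-1)).erase i,
          lam j * Real.exp (-(lam j * (d j + x * e i j)))
            = lam j * Real.exp (-(lam j * d j)) := by
        intro j hj
        have hji : j ≠ i := (Finset.mem_erase.1 hj).1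
        have : e i j = 0 := by rw [he]; simp [hji]
        rw [this]; ring_nf
      rw [Finset.prod_congr rfl hrest, heii]
      rw [show -(lam i * (d i + x * 1)) = -(lam i * d i) + -(lam i * x) by ring,
        Real.exp_add]
      ring
  -- key claim: `η d i = fπ d / n`
  have key : ∀ i, 1 ≤ i → i ≤ n → ∀ d : ℕ → ℝ, (∀ j, 0 ≤ d j) →
      η d i = fπ d / n := by
    intro i hi1
    induction i, hi1 using Nat.le_induction with
    | base =>
      intro _ d hd
      rw [hη1 d hd]
      have hσle1 : σle 1 = σ 1 := by rw [hσle]; simp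
      have hl1 : lam 1 + 1 = n * σ 1 := by
        rw [hlam, hσle1]; push_cast; ring
      have hpos : 0 < lam 1 + 1 := by
        rcases eq_or_lt_of_le hn with h1 | h2
        · have hσ11 : σ 1 = 1 := by rw [← hσ1, ← h1]; simp
          rw [hl1, ← h1, hσ11]; norm_num
        · have hst := hstar 1 (by simp only [Finset.mem_Icc]; omega)
          have hnpos : (0:ℝ) < n := by positivity
          rw [div_lt_iff₀ hnpos] at hst
          rw [hlam, hσle1]; push_cast; nlinarith
      have hIg : (fun x : ℝ => fπ (fun j => d j + x * e 1 j) * Real.exp (-x))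
          = fun x => fπ d * Real.exp (-((lam 1 + 1) * x)) := by
        funext x
        rw [hS d x 1 le_rfl hn, mul_assoc, ← Real.exp_add,
          show -(lam 1 * x) + -x = -((lam 1 + 1) * x) by ring]
      rw [hIg, MeasureTheory.integral_const_mul, aux_exp_Ioi hpos, hl1]
      have hσ1ne : σ 1 ≠ 0 := by
        intro h0
        rw [h0, mul_zero] at hl1
        linarith [hl1 ▸ hpos]
      field_simp
    | succ i hi ih =>
      intro hin d hd
      rw [hηi d hd (i+1) (by omega) hin]
      simp only [Nat.add_sub_cancel]
      set c : ℝ := (n : ℝ) * σ (i+1) with hc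
      have hσpos : 0 ≤ σ (i+1) := hσ0 (i+1) (by simp only [Finset.mem_Icc]; omega)
      have hdiff : lam i - lam (i+1) = 1 - c := by
        rw [hlam, hlam, hσle (i+1),
          Finset.sum_Icc_succ_top (by omega : 1 ≤ i + 1), ← hσle i, hc]
        push_cast; ring
      have hfs : ∀ x : ℝ, fπ (fun j => d j + x * (e (i+1) j - e i j))
          = fπ d * Real.exp ((1 - c) * x) := by
        intro x
        have hfun : (fun j => d j + x * (e (i+1) j - e i j))
            = (fun j => (fun j' => d j' + (-x) * e i j') j + x * e (i+1) j) := by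
          funext j; ring
        rw [hfun, hS _ x (i+1) (by omega) hin, hS d (-x) i hi (by omega),
          mul_assoc, ← Real.exp_add,
          show -(lam i * -x) + -(lam (i+1) * x) = (lam i - lam (i+1)) * x by ring,
          hdiff]
      have hIg : (fun x : ℝ =>
          fπ (fun j => d j + x * (e (i+1) j - e i j)) * Real.exp (-x))
          = fun x => fπ d * Real.exp (-(c * x)) := by
        funext x
        rw [hfs x, mul_assoc, ← Real.exp_add,
          show (1 - c) * x + -x = -(c * x) by ring]
      have hd' : ∀ j, 0 ≤ d j + d i * (e (i+1) j - e i j) := by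
        intro j
        rw [he, he]
        split_ifs with h1 h2 h2
        · simpa using hd j
        · have := hd j; have := hd i; nlinarith
        · obtain ⟨rfl, -⟩ := h2; have := hd i; nlinarith
        · simpa using hd j
      have hη' := ih (by omega) (fun j => d j + d i * (e (i+1) j - e i j)) hd'
      rw [hη', hfs (d i), hIg, intervalIntegral.integral_const_mul,
        div_mul_eq_mul_div, mul_assoc,
        show Real.exp ((1 - c) * d i) * Real.exp (-(d i)) = Real.exp (-(c * d i)) by
          rw [← Real.exp_add]; ring_nf]
      rcases eq_or_lt_of_le hσpos with h0 | hcpos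
      · simp [hc, ← h0]
      · have hcne : c ≠ 0 := by
          rw [hc]; positivity
        rw [aux_exp_interval c (d i) hcne]
        have hcpos' : (0:ℝ) < c := by rw [hc]; positivity
        field_simp
        ring
  -- sum up
  have hsum : ∀ i ∈ Finset.Icc 1 n, η d i = fπ d / n := by
    intro i hi
    exact key i (Finset.mem_Icc.1 hi).1 (Finset.mem_Icc.1 hi).2 d hd
  rw [Finset.sum_congr rfl hsum, Finset.sum_const, Nat.card_Icc]
  simp only [Nat.add_sub_cancel, nsmul_eq_mul]
  field_simp
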